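/- Consider the simplified coevolutionary model (A = W, α = 0, γ = 0) with homogeneous λ, β ∈ (0,1), W symmetric, irreducible, row-stochastic with w_{ii} > 0 for all i, and suppose Assumption 2 holds. Assume there exists a partition (V_p, V_n) of the agents into two nonempty disjoint sets such that Σ_{j∈V_p} w_{ij} > max( (1-2λ)/(1-λ), (1/2)(1 + β(1-λ)/(1-βλ)) ) for every i ∈ V_p and Σ_{j∈V_n} w_{ij} > max( (1-2λ)/(1-λ), (1/2)(1 + β(1-λ)/(1-βλ)) ) for every i ∈ V_n. Then if the initial state z(0) is polarized with respect to (V_p, V_n), the state z(t) is polarized with respect to (V_p, V_n) for all t ∈ ℤ≥0, and lim_{t→∞} z(t) = z*, where z* is the polarized equilibrium with respect to (V_p, V_n). -/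
import Mathlib

open Finset Matrix Filter

/-- The quantity `δ_i(z)` in the simplified model (`A = W`, `α = 0`, `γ = 0`). -/
noncomputable def sDelta {n : ℕ} (w : Fin n → Fin n → ℝ) (lam β : ℝ)
    (x y : Fin n → ℝ) (i : Fin n) : ℝ :=
  2 * lam * β * (1 - lam) * (∑ j, w i j * y j) + (1 - β) * lam * (∑ j, w i j * x j)

/-- `S(d; x_i)`: `+1` if `d > 0`, `-1` if `d < 0`, and `x_i` if `d = 0`. -/
noncomputable def brS (d xi : ℝ) : ℝ := if 0 < d then 1 else if d < 0 then -1 else xi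

/-- A state `(x, y)` is an equilibrium of the simplified coevolutionary model if applying
the update rule to any agent leaves the state unchanged. -/
noncomputable def isEquilibrium {n : ℕ} (w : Fin n → Fin n → ℝ) (lam β : ℝ)
    (x y : Fin n → ℝ) : Prop :=
  ∀ i, brS (sDelta w lam β x y i) (x i) = x i ∧
    (1 - lam) * (∑ j, w i j * y j) + lam * brS (sDelta w lam β x y i) (x i) = y i

/-- A state `(x, y)` is polarized with respect to the partition `(Vp, Vn)`. -/
def Polarized {n : ℕ} (Vp Vn : Finset (Fin n)) (x y : Fin n → ℝ) : Prop :=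
  (∀ i ∈ Vp, x i = 1 ∧ 0 < y i) ∧ (∀ i ∈ Vn, x i = -1 ∧ y i < 0)

/-- A nonnegative matrix (given as a function) is irreducible if for every pair of indices
some power of the matrix has a positive entry there. -/
def FunIrreducible {n : ℕ} (W : Fin n → Fin n → ℝ) : Prop :=
  ∀ i j, ∃ k : ℕ, 0 < ((Matrix.of W) ^ k) i j

set_option maxHeartbeats 2000000 in
theorem stmt17 {n : ℕ} (hn : 2 ≤ n) (w : Fin n → Fin n → ℝ) (lam β : ℝ)
    (hw : ∀ i j, 0 ≤ w i j) (hwrow : ∀ i, ∑ j, w i j = 1)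
    (hwsymm : ∀ i j, w i j = w j i) (hwirr : FunIrreducible w)
    (hwdiag : ∀ i, 0 < w i i)
    (hlam : lam ∈ Set.Ioo (0 : ℝ) 1) (hβ : β ∈ Set.Ioo (0 : ℝ) 1)
    -- a partition of the agents into two nonempty disjoint sets
    (Vp Vn : Finset (Fin n)) (hdisj : Disjoint Vp Vn) (hunion : Vp ∪ Vn = Finset.univ)
    (hVp : Vp.Nonempty) (hVn : Vn.Nonempty)
    -- the in-group weight condition
    (hcp : ∀ i ∈ Vp, (∑ j ∈ Vp, w i j) >
      max ((1 - 2 * lam) / (1 - lam)) (1 / 2 * (1 + β * (1 - lam) / (1 - β * lam))))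
    (hcn : ∀ i ∈ Vn, (∑ j ∈ Vn, w i j) >
      max ((1 - 2 * lam) / (1 - lam)) (1 / 2 * (1 + β * (1 - lam) / (1 - β * lam))))
    -- the trajectory of the simplified coevolutionary model: σ t is active at time t
    (x y : ℕ → Fin n → ℝ) (σ : ℕ → Fin n)
    (h0x : ∀ j, x 0 j = -1 ∨ x 0 j = 1) (h0y : ∀ j, y 0 j ∈ Set.Icc (-1 : ℝ) 1)
    (hupx : ∀ t, x (t + 1) (σ t) = brS (sDelta w lam β (x t) (y t) (σ t)) (x t (σ t)))
    (hupy : ∀ t, y (t + 1) (σ t) =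
      (1 - lam) * (∑ j, w (σ t) j * y t j) +
        lam * brS (sDelta w lam β (x t) (y t) (σ t)) (x t (σ t)))
    (hkeep : ∀ t j, j ≠ σ t → x (t + 1) j = x t j ∧ y (t + 1) j = y t j)
    -- Assumption 2: in every window of length T every agent activates at least once
    (T : ℕ) (hT : ∀ t : ℕ, ∀ i : Fin n, ∃ s : ℕ, t ≤ s ∧ s < t + T ∧ σ s = i)
    -- the initial state is polarized with respect to `(Vp, Vn)`
    (h0 : Polarized Vp Vn (x 0) (y 0)) :
    (∀ t, Polarized Vp Vn (x t) (y t)) ∧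
    ∃ xstar ystar : Fin n → ℝ,
      isEquilibrium w lam β xstar ystar ∧ Polarized Vp Vn xstar ystar ∧
      (∀ i, Tendsto (fun t => x t i) atTop (nhds (xstar i))) ∧
      (∀ i, Tendsto (fun t => y t i) atTop (nhds (ystar i))) := by
  obtain ⟨hl0, hl1⟩ := hlam
  obtain ⟨hb0, hb1⟩ := hβ
  have h1l : (0:ℝ) < 1 - lam := by linarith
  have hq : (0:ℝ) < 1 - β * lam := by nlinarith
  set c : Fin n → ℝ := fun i => if i ∈ Vp then 1 else -1 with hcdef
  have hmem : ∀ j : Fin n, j ∈ Vp ∨ j ∈ Vn := by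
    intro j
    have : j ∈ Vp ∪ Vn := by rw [hunion]; exact Finset.mem_univ j
    exact Finset.mem_union.mp this
  have hpn : ∀ j ∈ Vp, j ∉ Vn := fun j hj => Finset.disjoint_left.mp hdisj hj
  have hnp : ∀ j ∈ Vn, j ∉ Vp := fun j hj => Finset.disjoint_right.mp hdisj hj
  have hc1 : ∀ j ∈ Vp, c j = 1 := fun j hj => if_pos hj
  have hc2 : ∀ j ∈ Vn, c j = -1 := fun j hj => if_neg (hnp j hj)
  have hsplit : ∀ f : Fin n → ℝ, ∑ j, f j = ∑ j ∈ Vp, f j + ∑ j ∈ Vn, f j := by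
    intro f
    rw [← hunion]
    exact Finset.sum_union hdisj
  have hsn : ∀ i, ∑ j ∈ Vn, w i j = 1 - ∑ j ∈ Vp, w i j := by
    intro i
    have := hwrow i
    rw [hsplit (fun j => w i j)] at this
    linarith
  -- the weighted average of c
  have hsumc : ∀ i, ∑ j, w i j * c j = 2 * (∑ j ∈ Vp, w i j) - 1 := by
    intro i
    rw [hsplit (fun j => w i j * c j)]
    have e1 : ∑ j ∈ Vp, w i j * c j = ∑ j ∈ Vp, w i j :=
      Finset.sum_congr rfl fun j hj => by rw [hc1 j hj, mul_one]
    have e2 : ∑ j ∈ Vn, w i j * c j = -∑ j ∈ Vn, w i j := by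
      rw [← Finset.sum_neg_distrib]
      exact Finset.sum_congr rfl fun j hj => by rw [hc2 j hj]; ring
    rw [e1, e2, hsn i]; ring
  -- weighted averages are bounded by sup of absolute values
  have hS : ∀ (i : Fin n) (d : Fin n → ℝ) (M : ℝ), (∀ j, |d j| ≤ M) →
      |∑ j, w i j * d j| ≤ M := by
    intro i d M hd
    calc |∑ j, w i j * d j| ≤ ∑ j, |w i j * d j| := Finset.abs_sum_le_sum_abs _ _
      _ = ∑ j, w i j * |d j| :=
          Finset.sum_congr rfl fun j _ => by rw [abs_mul, abs_of_nonneg (hw i j)]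
      _ ≤ ∑ j, w i j * M :=
          Finset.sum_le_sum fun j _ => mul_le_mul_of_nonneg_left (hd j) (hw i j)
      _ = M := by rw [← Finset.sum_mul, hwrow i, one_mul]
  -- lower bound on weighted average for "positive-signed" vectors
  have hLB : ∀ (i : Fin n) (d : Fin n → ℝ), (∀ j ∈ Vp, 0 ≤ d j) → (∀ j, -1 ≤ d j) →
      (∑ j ∈ Vp, w i j) - 1 ≤ ∑ j, w i j * d j := by
    intro i d h1 h2
    rw [hsplit (fun j => w i j * d j)]
    have A : (0:ℝ) ≤ ∑ j ∈ Vp, w i j * d j :=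
      Finset.sum_nonneg fun j hj => mul_nonneg (hw i j) (h1 j hj)
    have B : -(∑ j ∈ Vn, w i j) ≤ ∑ j ∈ Vn, w i j * d j := by
      rw [← Finset.sum_neg_distrib]
      exact Finset.sum_le_sum fun j _ => by nlinarith [hw i j, h2 j]
    have C := hsn i
    linarith
  -- upper bound for "negative-signed" vectors
  have hUB : ∀ (i : Fin n) (d : Fin n → ℝ), (∀ j ∈ Vn, d j ≤ 0) → (∀ j, d j ≤ 1) →
      ∑ j, w i j * d j ≤ 1 - ∑ j ∈ Vn, w i j := by
    intro i d h1 h2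
    rw [hsplit (fun j => w i j * d j)]
    have A : ∑ j ∈ Vn, w i j * d j ≤ 0 :=
      Finset.sum_nonpos fun j hj => mul_nonpos_of_nonneg_of_nonpos (hw i j) (h1 j hj)
    have B : ∑ j ∈ Vp, w i j * d j ≤ ∑ j ∈ Vp, w i j :=
      Finset.sum_le_sum fun j _ => by nlinarith [hw i j, h2 j]
    have C := hsn i
    linarith
  -- the sign of δ at a weakly polarized state with action vector c
  have hdel : ∀ yv : Fin n → ℝ, (∀ j ∈ Vp, 0 ≤ yv j) → (∀ j ∈ Vn, yv j ≤ 0) →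
      (∀ j, -1 ≤ yv j ∧ yv j ≤ 1) →
      (∀ i ∈ Vp, 0 < sDelta w lam β c yv i) ∧ (∀ i ∈ Vn, sDelta w lam β c yv i < 0) := by
    intro yv h1 h2 h3
    constructor
    · intro i hi
      have hs2 : 1 / 2 * (1 + β * (1 - lam) / (1 - β * lam)) < ∑ j ∈ Vp, w i j :=
        (le_max_right _ _).trans_lt (hcp i hi)
      have hs2' : β * (1 - lam) < (2 * (∑ j ∈ Vp, w i j) - 1) * (1 - β * lam) := by
        have h := (div_lt_iff₀ hq).mp (show β * (1 - lam) / (1 - β * lam)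
          < 2 * (∑ j ∈ Vp, w i j) - 1 by linarith)
        linarith
      have hSy := hLB i yv h1 (fun j => (h3 j).1)
      have hcoef : (0:ℝ) < 2 * lam * β * (1 - lam) := by positivity
      have hbr : (0:ℝ) < 2 * lam * β * (1 - lam) * ((∑ j ∈ Vp, w i j) - 1)
          + (1 - β) * lam * (2 * (∑ j ∈ Vp, w i j) - 1) := by nlinarith [hs2', hl0]
      have hmono := mul_le_mul_of_nonneg_left hSy hcoef.le
      rw [sDelta, hsumc i]
      nlinarith [hmono, hbr]
    · intro i hi
      have hs2 : 1 / 2 * (1 + β * (1 - lam) / (1 - β * lam)) < ∑ j ∈ Vn, w i j :=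
        (le_max_right _ _).trans_lt (hcn i hi)
      have hs2' : β * (1 - lam) < (2 * (∑ j ∈ Vn, w i j) - 1) * (1 - β * lam) := by
        have h := (div_lt_iff₀ hq).mp (show β * (1 - lam) / (1 - β * lam)
          < 2 * (∑ j ∈ Vn, w i j) - 1 by linarith)
        linarith
      have hSy := hUB i yv h2 (fun j => (h3 j).2)
      have hcoef : (0:ℝ) < 2 * lam * β * (1 - lam) := by positivity
      have hbr : 2 * lam * β * (1 - lam) * (1 - (∑ j ∈ Vn, w i j))
          + (1 - β) * lam * (1 - 2 * (∑ j ∈ Vn, w i j)) < 0 := by nlinarith [hs2', hl0]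
      have hmono := mul_le_mul_of_nonneg_left hSy hcoef.le
      have hcv : ∑ j, w i j * c j = 1 - 2 * (∑ j ∈ Vn, w i j) := by
        rw [hsumc i, hsn i]; ring
      rw [sDelta, hcv]
      nlinarith [hmono, hbr]
  -- the best response at a weakly polarized state with action vector c is c
  have hbr : ∀ yv : Fin n → ℝ, (∀ j ∈ Vp, 0 ≤ yv j) → (∀ j ∈ Vn, yv j ≤ 0) →
      (∀ j, -1 ≤ yv j ∧ yv j ≤ 1) → ∀ i, brS (sDelta w lam β c yv i) (c i) = c i := by
    intro yv h1 h2 h3 i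
    rcases hmem i with h | h
    · have hd := (hdel yv h1 h2 h3).1 i h
      rw [hc1 i h]
      simp only [brS, if_pos hd]
    · have hd := (hdel yv h1 h2 h3).2 i h
      rw [hc2 i h]
      simp only [brS, if_neg (asymm hd), if_pos hd]
  -- the condition coming from the first term of the max
  have hcond1p : ∀ i ∈ Vp, 0 < (1 - lam) * ((∑ j ∈ Vp, w i j) - 1) + lam := by
    intro i hi
    have hs1 : (1 - 2 * lam) / (1 - lam) < ∑ j ∈ Vp, w i j :=
      (le_max_left _ _).trans_lt (hcp i hi)
    have := (div_lt_iff₀ h1l).mp hs1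
    nlinarith
  have hcond1n : ∀ i ∈ Vn, (1 - lam) * (1 - (∑ j ∈ Vn, w i j)) - lam < 0 := by
    intro i hi
    have hs1 : (1 - 2 * lam) / (1 - lam) < ∑ j ∈ Vn, w i j :=
      (le_max_left _ _).trans_lt (hcn i hi)
    have := (div_lt_iff₀ h1l).mp hs1
    nlinarith
  -- the main invariant
  have hQ : ∀ t, (∀ j, x t j = c j) ∧ (∀ j ∈ Vp, 0 < y t j) ∧ (∀ j ∈ Vn, y t j < 0) ∧
      (∀ j, -1 ≤ y t j ∧ y t j ≤ 1) := by
    intro t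
    induction t with
    | zero =>
      refine ⟨fun j => ?_, fun j hj => (h0.1 j hj).2, fun j hj => (h0.2 j hj).2,
        fun j => ⟨(h0y j).1, (h0y j).2⟩⟩
      rcases hmem j with h | h
      · rw [(h0.1 j h).1, hc1 j h]
      · rw [(h0.2 j h).1, hc2 j h]
    | succ t ih =>
      obtain ⟨ihx, ihp, ihn, ihb⟩ := ih
      have hxe : x t = c := funext ihx
      have hbv : brS (sDelta w lam β (x t) (y t) (σ t)) (x t (σ t)) = c (σ t) := by
        rw [hxe]
        exact hbr (y t) (fun j hj => (ihp j hj).le) (fun j hj => (ihn j hj).le) ihb (σ t)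
      have hyv : y (t + 1) (σ t) = (1 - lam) * (∑ j, w (σ t) j * y t j) + lam * c (σ t) := by
        rw [hupy t, hbv]
      have hxv : x (t + 1) (σ t) = c (σ t) := by rw [hupx t, hbv]
      have hSyb : |∑ j, w (σ t) j * y t j| ≤ 1 :=
        hS (σ t) (y t) 1 fun j => abs_le.mpr ⟨(ihb j).1, (ihb j).2⟩
      have hSyb' := abs_le.mp hSyb
      have hxall : ∀ j, x (t + 1) j = c j := by
        intro j
        by_cases hj : j = σ t
        · rw [hj]; exact hxv
        · rw [(hkeep t j hj).1]; exact ihx j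
      refine ⟨hxall, ?_, ?_, ?_⟩
      · intro j hj
        by_cases hjs : j = σ t
        · subst hjs
          rw [hyv, hc1 _ hj]
          have hlb := hLB (σ t) (y t) (fun k hk => (ihp k hk).le) (fun k => (ihb k).1)
          have := hcond1p _ hj
          nlinarith [mul_le_mul_of_nonneg_left hlb h1l.le]
        · rw [(hkeep t j hjs).2]; exact ihp j hj
      · intro j hj
        by_cases hjs : j = σ t
        · subst hjs
          rw [hyv, hc2 _ hj]
          have hub := hUB (σ t) (y t) (fun k hk => (ihn k hk).le) (fun k => (ihb k).2)
          have := hcond1n _ hj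
          nlinarith [mul_le_mul_of_nonneg_left hub h1l.le]
        · rw [(hkeep t j hjs).2]; exact ihn j hj
      · intro j
        by_cases hjs : j = σ t
        · subst hjs
          rw [hyv]
          rcases hmem (σ t) with h | h
          · rw [hc1 _ h]; constructor <;> nlinarith [hSyb'.1, hSyb'.2]
          · rw [hc2 _ h]; constructor <;> nlinarith [hSyb'.1, hSyb'.2]
        · rw [(hkeep t j hjs).2]; exact ihb j
  -- all states are polarized
  have hpol : ∀ t, Polarized Vp Vn (x t) (y t) := by
    intro t
    obtain ⟨hx, hp, hnn, _⟩ := hQ t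
    exact ⟨fun i hi => ⟨(hx i).trans (hc1 i hi), hp i hi⟩,
      fun i hi => ⟨(hx i).trans (hc2 i hi), hnn i hi⟩⟩
  -- the fixed point of the affine map
  have hK : (0:ℝ) ≤ 1 - lam := h1l.le
  set F : (Fin n → ℝ) → (Fin n → ℝ) :=
    fun v i => (1 - lam) * (∑ j, w i j * v j) + lam * c i with hFdef
  set K : NNReal := ⟨1 - lam, hK⟩ with hKdef
  have hlip : LipschitzWith K F := by
    apply LipschitzWith.of_dist_le_mul
    intro v z
    rw [dist_eq_norm, dist_eq_norm]
    have hco : (K : ℝ) = 1 - lam := rfl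
    rw [hco]
    apply (pi_norm_le_iff_of_nonneg (mul_nonneg hK (norm_nonneg _))).mpr
    intro i
    have he : (F v - F z) i = (1 - lam) * (∑ j, w i j * (v j - z j)) := by
      simp only [Pi.sub_apply, hFdef]
      rw [show ∑ j, w i j * (v j - z j) = ∑ j, w i j * v j - ∑ j, w i j * z j by
        rw [← Finset.sum_sub_distrib]; exact Finset.sum_congr rfl fun j _ => mul_sub _ _ _]
      ring
    rw [Real.norm_eq_abs, he, abs_mul, abs_of_nonneg hK]
    apply mul_le_mul_of_nonneg_left _ hK
    apply hS
    intro j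
    have := norm_le_pi_norm (v - z) j
    simpa [Real.norm_eq_abs] using this
  have hcontr : ContractingWith K F := by
    refine ⟨?_, hlip⟩
    rw [← NNReal.coe_lt_coe]
    show (1:ℝ) - lam < (1:NNReal)
    push_cast
    linarith
  obtain ⟨ystar, hfixpt⟩ : ∃ v : Fin n → ℝ, F v = v :=
    ⟨ContractingWith.fixedPoint F hcontr, hcontr.fixedPoint_isFixedPt⟩
  have hfix : ∀ i, (1 - lam) * (∑ j, w i j * ystar j) + lam * c i = ystar i := by
    intro i
    have := congrFun hfixpt i
    rw [hFdef] at this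
    exact this
  -- error sequence
  set E : ℕ → ℝ := fun t => ‖y t - ystar‖ with hEdef
  have hEnn : ∀ t, 0 ≤ E t := fun t => norm_nonneg _
  have hEi : ∀ t j, |y t j - ystar j| ≤ E t := by
    intro t j
    have := norm_le_pi_norm (y t - ystar) j
    simpa [Real.norm_eq_abs] using this
  have hEle : ∀ (t : ℕ) (M : ℝ), 0 ≤ M → (∀ j, |y t j - ystar j| ≤ M) → E t ≤ M := by
    intro t M hM h
    exact (pi_norm_le_iff_of_nonneg hM).mpr fun j => by
      simpa [Real.norm_eq_abs] using h j
  -- the one-step estimate for the updating agent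
  have hustep : ∀ t, |y (t + 1) (σ t) - ystar (σ t)| ≤ (1 - lam) * E t := by
    intro t
    obtain ⟨ihx, ihp, ihn, ihb⟩ := hQ t
    have hxe : x t = c := funext ihx
    have hbv : brS (sDelta w lam β (x t) (y t) (σ t)) (x t (σ t)) = c (σ t) := by
      rw [hxe]
      exact hbr (y t) (fun j hj => (ihp j hj).le) (fun j hj => (ihn j hj).le) ihb (σ t)
    have h3 : y (t + 1) (σ t) - ystar (σ t)
        = (1 - lam) * (∑ j, w (σ t) j * (y t j - ystar j)) := by
      rw [hupy t, hbv, ← hfix (σ t)]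
      rw [show ∑ j, w (σ t) j * (y t j - ystar j)
          = ∑ j, w (σ t) j * y t j - ∑ j, w (σ t) j * ystar j by
        rw [← Finset.sum_sub_distrib]; exact Finset.sum_congr rfl fun j _ => mul_sub _ _ _]
      ring
    rw [h3, abs_mul, abs_of_nonneg hK]
    exact mul_le_mul_of_nonneg_left (hS (σ t) _ _ fun j => hEi t j) hK
  -- E is antitone
  have hEmono : ∀ t, E (t + 1) ≤ E t := by
    intro t
    apply hEle _ _ (hEnn t)
    intro j
    by_cases hjs : j = σ t
    · subst hjs
      have := hustep t
      nlinarith [hEnn t]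
    · rw [(hkeep t j hjs).2]; exact hEi t j
  have hEanti : Antitone E := antitone_nat_of_succ_le hEmono
  -- persistence of the error estimate
  have hper : ∀ (t : ℕ) (i : Fin n) (s : ℕ), (∃ u, t ≤ u ∧ u < s ∧ σ u = i) →
      |y s i - ystar i| ≤ (1 - lam) * E t := by
    intro t i s
    induction s with
    | zero => rintro ⟨u, _, hu2, _⟩; omega
    | succ s ih =>
      rintro ⟨u, hu1, hu2, hu3⟩
      have hts : t ≤ s := le_trans hu1 (Nat.lt_succ_iff.mp hu2)
      by_cases hcase : i = σ s
      · subst hcase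
        calc |y (s + 1) (σ s) - ystar (σ s)| ≤ (1 - lam) * E s := hustep s
          _ ≤ (1 - lam) * E t := mul_le_mul_of_nonneg_left (hEanti hts) hK
      · rw [(hkeep s i hcase).2]
        have hus : u ≠ s := fun h => hcase (h ▸ hu3).symm
        exact ih ⟨u, hu1, by omega, hu3⟩
  -- contraction over each window
  have hwin : ∀ t, E (t + T) ≤ (1 - lam) * E t := by
    intro t
    apply hEle _ _ (mul_nonneg hK (hEnn t))
    intro j
    obtain ⟨s, hs1, hs2, hs3⟩ := hT t j
    exact hper t j (t + T) ⟨s, hs1, hs2, hs3⟩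
  -- geometric decay
  have hgeom : ∀ k, E (k * T) ≤ (1 - lam) ^ k * E 0 := by
    intro k
    induction k with
    | zero => simp
    | succ k ih =>
      have h1 : (k + 1) * T = k * T + T := by ring
      rw [h1]
      calc E (k * T + T) ≤ (1 - lam) * E (k * T) := hwin (k * T)
        _ ≤ (1 - lam) * ((1 - lam) ^ k * E 0) := mul_le_mul_of_nonneg_left ih hK
        _ = (1 - lam) ^ (k + 1) * E 0 := by ring
  -- convergence of y
  have hytend : ∀ i, Tendsto (fun t => y t i) atTop (nhds (ystar i)) := by
    intro i
    rw [Metric.tendsto_atTop]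
    intro ε hε
    have hgeo : Tendsto (fun k : ℕ => (1 - lam) ^ k * E 0) atTop (nhds 0) := by
      have h := tendsto_pow_atTop_nhds_zero_of_lt_one hK (by linarith)
      simpa using h.mul_const (E 0)
    obtain ⟨k, hk⟩ := (hgeo.eventually (gt_mem_nhds hε)).exists
    refine ⟨k * T, fun t ht => ?_⟩
    rw [Real.dist_eq]
    calc |y t i - ystar i| ≤ E t := hEi t i
      _ ≤ E (k * T) := hEanti ht
      _ ≤ (1 - lam) ^ k * E 0 := hgeom k
      _ < ε := hk
  -- sign properties of ystar
  have hysp : ∀ j ∈ Vp, 0 ≤ ystar j := fun j hj =>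
    ge_of_tendsto' (hytend j) fun t => ((hQ t).2.1 j hj).le
  have hysn : ∀ j ∈ Vn, ystar j ≤ 0 := fun j hj =>
    le_of_tendsto' (hytend j) fun t => ((hQ t).2.2.1 j hj).le
  have hysb : ∀ j, -1 ≤ ystar j ∧ ystar j ≤ 1 := fun j =>
    ⟨ge_of_tendsto' (hytend j) fun t => ((hQ t).2.2.2 j).1,
     le_of_tendsto' (hytend j) fun t => ((hQ t).2.2.2 j).2⟩
  -- strict signs
  have hyspp : ∀ j ∈ Vp, 0 < ystar j := by
    intro j hj
    have hlb := hLB j ystar hysp (fun k => (hysb k).1)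
    have h1 := hcond1p j hj
    have := hfix j
    rw [hc1 j hj] at this
    nlinarith [mul_le_mul_of_nonneg_left hlb hK]
  have hysnn : ∀ j ∈ Vn, ystar j < 0 := by
    intro j hj
    have hub := hUB j ystar hysn (fun k => (hysb k).2)
    have h1 := hcond1n j hj
    have := hfix j
    rw [hc2 j hj] at this
    nlinarith [mul_le_mul_of_nonneg_left hub hK]
  -- assemble
  refine ⟨hpol, c, ystar, ?_, ?_, ?_, hytend⟩
  · intro i
    have hb := hbr ystar hysp hysn hysb i
    refine ⟨hb, ?_⟩
    rw [hb]
    exact hfix i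
  · exact ⟨fun i hi => ⟨hc1 i hi, hyspp i hi⟩, fun i hi => ⟨hc2 i hi, hysnn i hi⟩⟩
  · intro i
    have : (fun t => x t i) = fun _ => c i := funext fun t => (hQ t).1 i
    rw [this]
    exact tendsto_const_nhds
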